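/- Exponential convergence to the equilibrium ρ for the Ochrombel model: let m ∈ L^∞(μ), m ≥ 0, satisfy Γ_B(c) m(c) = T_B* m(c) for μ-a.e. c and ∫₀^∞ m dμ = 1, and suppose there exist measurable ψ : (0,∞) → (0,∞) and ν₂ > 0 with ν₂ ψ(c₁) ≤ B(c,c₁) for μ⊗μ-a.e. (c,c₁) and ν₁ := ∫₀^∞ m(c)²/ψ(c) dμ(c) < ∞. Let p̃ : (0,∞) × [0,∞) → ℝ be bounded and measurable, differentiable in t for each c with ∂ₜ p̃(c,t) = ½(T_B p̃(·,t)(c) − Γ_B(c) p̃(c,t)); set ρ := ∫₀^∞ m(c) p̃(c,0) dμ(c); and assume differentiation under the integral sign is valid, i.e. t ↦ ∫ m p̃(·,t) dμ is differentiable with derivative ∫ m ∂ₜp̃(·,t) dμ, and E(t) := ∫₀^∞ m(c)(p̃(c,t) − ρ)² dμ(c) is differentiable with E′(t) = ∫₀^∞ 2 m(c)(p̃(c,t) − ρ) ∂ₜp̃(c,t) dμ(c). Then ∫₀^∞ m(c) p̃(c,t) dμ(c) = ρ for all t ≥ 0, and there exists a constant ν > 0, depending only on ν₁ and ν₂, such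 that E(t) ≤ E(0) e^{−νt} for all t ≥ 0. Hence p̃^∞ ≡ ρ is the asymptotically stable equilibrium of the linear scattering equation. -/

import Mathlib

/-!
Write the equation as `∂ₜ p = ½ L p` with the jump generator
`L f(c) = ∫ B(c,c₁) (f(c₁) - f(c)) dμ(c₁)`. The eigen-equation `Γ_B m = T_B* m` says that `m` is
stationary: `∫∫ B(c,c₁) m(c) f(c) = ∫∫ B(c,c₁) m(c) f(c₁)`. Hence `∫ m L f = 0`, which is the
conservation of mass, and `∫ m f L f = -½ D_B(f)` with the Dirichlet form
`D_B(f) = ∫∫ B(c,c₁) m(c) (f(c) - f(c₁))²`. For `q = p - ρ` we have `∫ m q = 0`, so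
`E = ∫∫ m(c) m(c₁) q(c) (q(c) - q(c₁))`, and Young's inequality with weight `ψ(c₁)` gives the
Poincaré inequality `E ≤ ν₁ D_ψ(q) ≤ (ν₁ / ν₂) D_B(q)`. Thus `E' ≤ -(ν₂ / (2 ν₁)) E`, and
Grönwall's inequality concludes.
-/

open MeasureTheory Set

/-- The finite measure on `(0,∞)` with density `g` with respect to Lebesgue measure. -/
noncomputable def netMeasure (g : ℝ → ℝ) : Measure ℝ :=
  (volume.restrict (Ioi (0:ℝ))).withDensity (fun c => ENNReal.ofReal (g c))

/-- `Γ_B(c) := ∫₀^∞ B(c,c₁) g(c₁) dc₁`. -/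
noncomputable def GamB (B : ℝ → ℝ → ℝ) (g : ℝ → ℝ) (c : ℝ) : ℝ :=
  ∫ c₁ in Ioi (0:ℝ), B c c₁ * g c₁

/-- `T_B h(c) := ∫₀^∞ B(c,c₁) h(c₁) g(c₁) dc₁`. -/
noncomputable def TB (B : ℝ → ℝ → ℝ) (g : ℝ → ℝ) (h : ℝ → ℝ) (c : ℝ) : ℝ :=
  ∫ c₁ in Ioi (0:ℝ), B c c₁ * h c₁ * g c₁

/-- `T_B* m(c) := ∫₀^∞ B(c₁,c) m(c₁) g(c₁) dc₁`. -/
noncomputable def TBstar (B : ℝ → ℝ → ℝ) (g : ℝ → ℝ) (m : ℝ → ℝ) (c : ℝ) : ℝ :=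
  ∫ c₁ in Ioi (0:ℝ), B c₁ c * m c₁ * g c₁

/-- Right-hand side of the Ochrombel linear scattering equation
`∂ₜ p̃ = ½(T_B p̃ − Γ_B p̃)`. -/
noncomputable def ochRHS (B : ℝ → ℝ → ℝ) (g : ℝ → ℝ) (p : ℝ → ℝ → ℝ) (c t : ℝ) : ℝ :=
  (1/2) * (TB B g (fun c' => p c' t) c - GamB B g c * p c t)

theorem le_mul_exp_of_hasDerivAt_le_neg_mul {E E' : ℝ → ℝ} {ν t : ℝ}
    (hE : ∀ s, HasDerivAt E (E' s) s) (hdecay : ∀ s, E' s ≤ -ν * E s) (ht : 0 ≤ t) :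
    E t ≤ E 0 * Real.exp (-ν * t) := by
  have := le_gronwallBound_of_liminf_deriv_right_le (δ := E 0) (K := -ν) (ε := 0)
    (fun s _ => (hE s).continuousAt.continuousWithinAt)
    (fun s _ _ hr => (hE s).hasDerivWithinAt.liminf_right_slope_le hr) le_rfl
    (fun s _ => (hdecay s).trans_eq (add_zero _).symm) t ⟨ht, le_rfl⟩
  simpa [gronwallBound_ε0] using this

theorem mul_mul_sub_le_young {m₁ m₂ x y ψ ν : ℝ} (hm₁ : 0 ≤ m₁) (hψ : 0 < ψ) (hν : 0 < ν) :
    m₁ * m₂ * x * (x - y) ≤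
      m₁ * x ^ 2 * (m₂ ^ 2 / ψ) / (2 * ν) + ν / 2 * (ψ * (m₁ * (x - y) ^ 2)) := by
  have hsq : 0 ≤ m₁ / (2 * ν * ψ) * (m₂ * x - ν * ψ * (x - y)) ^ 2 := by positivity
  have hexpand : m₁ * x ^ 2 * (m₂ ^ 2 / ψ) / (2 * ν) + ν / 2 * (ψ * (m₁ * (x - y) ^ 2))
      - m₁ * m₂ * x * (x - y) = m₁ / (2 * ν * ψ) * (m₂ * x - ν * ψ * (x - y)) ^ 2 := by
    field_simp
    ring
  linarith

theorem norm_sub_sq_le {x y : ℝ} {C : ℝ} (hx : ‖x‖ ≤ C) (hy : ‖y‖ ≤ C) :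
    ‖(x - y) ^ 2‖ ≤ (C + C) ^ 2 := by
  rw [norm_pow]
  exact pow_le_pow_left₀ (norm_nonneg _) ((norm_sub_le x y).trans (add_le_add hx hy)) 2

section JumpGenerator

variable {α : Type*} [MeasurableSpace α] {μ : Measure α} {B : α → α → ℝ} {m f w ψ : α → ℝ}
  {CB Cm Cw Cf : ℝ}

noncomputable def jumpGenerator (μ : Measure α) (B : α → α → ℝ) (f : α → ℝ) (c : α) : ℝ :=
  ∫ c₁, B c c₁ * (f c₁ - f c) ∂μ

noncomputable def dirichletForm (μ : Measure α) (B : α → α → ℝ) (m f : α → ℝ) : ℝ :=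
  ∫ z, B z.1 z.2 * (m z.1 * (f z.1 - f z.2) ^ 2) ∂μ.prod μ

theorem jumpGenerator_sub_const (f : α → ℝ) (a : ℝ) :
    jumpGenerator μ B (fun c => f c - a) = jumpGenerator μ B f := by
  ext c
  simp only [jumpGenerator, sub_sub_sub_cancel_right]

theorem integral_sq_div_pos (hm1 : ∫ c, m c ∂μ = 1) (hψ : ∀ c, 0 < ψ c)
    (hmψ : Integrable (fun c => m c ^ 2 / ψ c) μ) : 0 < ∫ c, m c ^ 2 / ψ c ∂μ := by
  have h0 : 0 ≤ᵐ[μ] fun c => m c ^ 2 / ψ c :=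
    ae_of_all _ fun c => div_nonneg (sq_nonneg _) (hψ c).le
  refine (integral_nonneg_of_ae h0).lt_of_ne fun h => ?_
  have hm0 : m =ᵐ[μ] 0 := ((integral_eq_zero_iff_of_nonneg_ae h0 hmψ).1 h.symm).mono
    fun c hc => by simpa [(hψ c).ne'] using hc
  simp [integral_congr_ae hm0] at hm1

variable [IsFiniteMeasure μ]

theorem integrable_kernel_mul_fst_mul {F : α × α → ℝ} {C : ℝ}
    (hB : Measurable fun z : α × α => B z.1 z.2) (hBb : ∀ᵐ z ∂μ.prod μ, ‖B z.1 z.2‖ ≤ CB)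
    (hm : Measurable m) (hmb : ∀ᵐ c ∂μ, ‖m c‖ ≤ Cm) (hF : Measurable F) (hFb : ∀ z, ‖F z‖ ≤ C) :
    Integrable (fun z => B z.1 z.2 * (m z.1 * F z)) (μ.prod μ) := by
  refine (Integrable.of_bound (by fun_prop) (Cm * C) ?_).bdd_mul hB.aestronglyMeasurable hBb
  filter_upwards [Measure.quasiMeasurePreserving_fst.ae hmb] with z hz
  exact norm_mul_le_of_le hz (hFb z)

theorem jumpGenerator_ae_eq (hB : Measurable fun z : α × α => B z.1 z.2)
    (hBb : ∀ᵐ z ∂μ.prod μ, ‖B z.1 z.2‖ ≤ CB) (hf : AEStronglyMeasurable f μ)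
    (hfb : ∀ᵐ c ∂μ, ‖f c‖ ≤ Cf) :
    ∀ᵐ c ∂μ, jumpGenerator μ B f c = ∫ c₁, B c c₁ * f c₁ ∂μ - (∫ c₁, B c c₁ ∂μ) * f c := by
  filter_upwards [Measure.ae_ae_of_ae_prod hBb] with c hc
  have hBc : Integrable (B c) μ :=
    .of_bound (by fun_prop : Measurable (B c)).aestronglyMeasurable CB hc
  rw [jumpGenerator, ← integral_mul_const, ← integral_sub (hBc.mul_bdd hf hfb) (hBc.mul_const _)]
  simp only [mul_sub]

theorem integral_mul_jumpGenerator (hB : Measurable fun z : α × α => B z.1 z.2)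
    (hBb : ∀ᵐ z ∂μ.prod μ, ‖B z.1 z.2‖ ≤ CB) (hw : Measurable w) (hwb : ∀ᵐ c ∂μ, ‖w c‖ ≤ Cw)
    (hf : Measurable f) (hfb : ∀ c, ‖f c‖ ≤ Cf) :
    ∫ c, w c * jumpGenerator μ B f c ∂μ = ∫ z, B z.1 z.2 * (w z.1 * (f z.2 - f z.1)) ∂μ.prod μ := by
  have hint := integrable_kernel_mul_fst_mul hB hBb hw hwb (F := fun z => f z.2 - f z.1)
    (by fun_prop) fun z => (norm_sub_le _ _).trans (add_le_add (hfb _) (hfb _))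
  rw [integral_prod _ hint]
  refine integral_congr_ae (ae_of_all _ fun c => ?_)
  simp only [jumpGenerator, ← integral_const_mul]
  congr with c₁
  ring

theorem integral_kernel_mul_fst_eq_snd (hB : Measurable fun z : α × α => B z.1 z.2)
    (hBb : ∀ᵐ z ∂μ.prod μ, ‖B z.1 z.2‖ ≤ CB) (hm : Measurable m) (hmb : ∀ᵐ c ∂μ, ‖m c‖ ≤ Cm)
    (hm_stat : ∀ᵐ c ∂μ, (∫ c₁, B c c₁ ∂μ) * m c = ∫ c₁, B c₁ c * m c₁ ∂μ)
    (hf : Measurable f) (hfb : ∀ c, ‖f c‖ ≤ Cf) :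
    ∫ z, B z.1 z.2 * (m z.1 * f z.1) ∂μ.prod μ = ∫ z, B z.1 z.2 * (m z.1 * f z.2) ∂μ.prod μ := by
  have hint := integrable_kernel_mul_fst_mul hB hBb hm hmb (F := fun z => f z.1) (by fun_prop)
    fun z => hfb z.1
  have hint' := integrable_kernel_mul_fst_mul hB hBb hm hmb (F := fun z => f z.2) (by fun_prop)
    fun z => hfb z.2
  calc ∫ z, B z.1 z.2 * (m z.1 * f z.1) ∂μ.prod μ
      = ∫ c, (∫ c₁, B c c₁ ∂μ) * m c * f c ∂μ := by
        rw [integral_prod _ hint]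
        refine integral_congr_ae (ae_of_all _ fun c => ?_)
        simp only [← integral_mul_const, mul_assoc]
    _ = ∫ c, (∫ c₁, B c₁ c * m c₁ ∂μ) * f c ∂μ := by
        refine integral_congr_ae ?_
        filter_upwards [hm_stat] with c hc
        rw [hc]
    _ = ∫ z, B z.2 z.1 * (m z.2 * f z.1) ∂μ.prod μ := by
        rw [integral_prod (fun z : α × α => B z.2 z.1 * (m z.2 * f z.1)) hint'.swap]
        refine integral_congr_ae (ae_of_all _ fun c => ?_)
        simp only [← integral_mul_const, mul_assoc]
    _ = ∫ z, B z.1 z.2 * (m z.1 * f z.2) ∂μ.prod μ :=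
        (integral_prod_swap fun z : α × α => B z.2 z.1 * (m z.2 * f z.1)).symm

theorem integral_mul_jumpGenerator_eq_zero (hB : Measurable fun z : α × α => B z.1 z.2)
    (hBb : ∀ᵐ z ∂μ.prod μ, ‖B z.1 z.2‖ ≤ CB) (hm : Measurable m) (hmb : ∀ᵐ c ∂μ, ‖m c‖ ≤ Cm)
    (hm_stat : ∀ᵐ c ∂μ, (∫ c₁, B c c₁ ∂μ) * m c = ∫ c₁, B c₁ c * m c₁ ∂μ)
    (hf : Measurable f) (hfb : ∀ c, ‖f c‖ ≤ Cf) :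
    ∫ c, m c * jumpGenerator μ B f c ∂μ = 0 := by
  have hint₁ := integrable_kernel_mul_fst_mul hB hBb hm hmb (F := fun z => f z.1) (by fun_prop)
    fun z => hfb z.1
  have hint₂ := integrable_kernel_mul_fst_mul hB hBb hm hmb (F := fun z => f z.2) (by fun_prop)
    fun z => hfb z.2
  rw [integral_mul_jumpGenerator hB hBb hm hmb hf hfb]
  simp only [mul_sub]
  rw [integral_sub hint₂ hint₁, integral_kernel_mul_fst_eq_snd hB hBb hm hmb hm_stat hf hfb,
    sub_self]

theorem integral_mul_jumpGenerator_self (hB : Measurable fun z : α × α => B z.1 z.2)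
    (hBb : ∀ᵐ z ∂μ.prod μ, ‖B z.1 z.2‖ ≤ CB) (hm : Measurable m) (hmb : ∀ᵐ c ∂μ, ‖m c‖ ≤ Cm)
    (hm_stat : ∀ᵐ c ∂μ, (∫ c₁, B c c₁ ∂μ) * m c = ∫ c₁, B c₁ c * m c₁ ∂μ)
    (hf : Measurable f) (hfb : ∀ c, ‖f c‖ ≤ Cf) :
    ∫ c, m c * f c * jumpGenerator μ B f c ∂μ = -(1 / 2) * dirichletForm μ B m f := by
  have hmfb : ∀ᵐ c ∂μ, ‖m c * f c‖ ≤ Cm * Cf := hmb.mono fun c hc => norm_mul_le_of_le hc (hfb c)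
  have hfsqb : ∀ c, ‖f c ^ 2‖ ≤ Cf ^ 2 := fun c => by
    rw [norm_pow]; exact pow_le_pow_left₀ (norm_nonneg _) (hfb c) 2
  have hint₁ := integrable_kernel_mul_fst_mul hB hBb hm hmb (F := fun z => f z.1 ^ 2)
    (by fun_prop) fun z => hfsqb z.1
  have hint₂ := integrable_kernel_mul_fst_mul hB hBb hm hmb (F := fun z => f z.2 ^ 2)
    (by fun_prop) fun z => hfsqb z.2
  have hD := integrable_kernel_mul_fst_mul hB hBb hm hmb (F := fun z => (f z.1 - f z.2) ^ 2)
    (by fun_prop) fun z => norm_sub_sq_le (hfb z.1) (hfb z.2)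
  have hdiff : Integrable (fun z => B z.1 z.2 * (m z.1 * f z.2 ^ 2)
      - B z.1 z.2 * (m z.1 * f z.1 ^ 2)) (μ.prod μ) := hint₂.sub hint₁
  rw [integral_mul_jumpGenerator hB hBb (by fun_prop) hmfb hf hfb]
  calc ∫ z, B z.1 z.2 * (m z.1 * f z.1 * (f z.2 - f z.1)) ∂μ.prod μ
      = ∫ z, -(1 / 2) * (B z.1 z.2 * (m z.1 * (f z.1 - f z.2) ^ 2))
          + 1 / 2 * (B z.1 z.2 * (m z.1 * f z.2 ^ 2) - B z.1 z.2 * (m z.1 * f z.1 ^ 2))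
          ∂μ.prod μ :=
        integral_congr_ae (ae_of_all _ fun z => by ring)
    _ = -(1 / 2) * dirichletForm μ B m f + 1 / 2 *
          ((∫ z, B z.1 z.2 * (m z.1 * f z.2 ^ 2) ∂μ.prod μ)
            - ∫ z, B z.1 z.2 * (m z.1 * f z.1 ^ 2) ∂μ.prod μ) := by
        rw [integral_add (hD.const_mul _) (hdiff.const_mul _), integral_const_mul,
          integral_const_mul, integral_sub hint₂ hint₁, dirichletForm]
    _ = -(1 / 2) * dirichletForm μ B m f := by
        rw [← integral_kernel_mul_fst_eq_snd hB hBb hm hmb hm_stat (by fun_prop) hfsqb, sub_self,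
          mul_zero, add_zero]

theorem integral_mul_sq_le_mul_dirichletForm (hm : Integrable m μ) (hm0 : 0 ≤ᵐ[μ] m)
    (hm1 : ∫ c, m c ∂μ = 1) (hψ : ∀ c, 0 < ψ c) (hmψ : Integrable (fun c => m c ^ 2 / ψ c) μ)
    (hf : AEStronglyMeasurable f μ) (hfb : ∀ᵐ c ∂μ, ‖f c‖ ≤ Cf) (hf0 : ∫ c, m c * f c ∂μ = 0)
    (hD : Integrable (fun z => ψ z.2 * (m z.1 * (f z.1 - f z.2) ^ 2)) (μ.prod μ)) :
    ∫ c, m c * f c ^ 2 ∂μ ≤ (∫ c, m c ^ 2 / ψ c ∂μ) * dirichletForm μ (fun _ c₁ => ψ c₁) m f := by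
  set ν₁ := ∫ c, m c ^ 2 / ψ c ∂μ
  have hν₁ : 0 < ν₁ := integral_sq_div_pos hm1 hψ hmψ
  have hmf : Integrable (fun c => m c * f c) μ := hm.mul_bdd hf hfb
  have hmf2 : Integrable (fun c => m c * f c ^ 2) μ :=
    (hmf.mul_bdd hf hfb).congr (ae_of_all _ fun c => by ring)
  have hE : ∫ c, m c * f c ^ 2 ∂μ
      = ∫ z, m z.1 * m z.2 * f z.1 * (f z.1 - f z.2) ∂μ.prod μ := by
    calc ∫ c, m c * f c ^ 2 ∂μ
        = (∫ c, m c * f c ^ 2 ∂μ) * (∫ c, m c ∂μ) - (∫ c, m c * f c ∂μ) * ∫ c, m c * f c ∂μ := by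
          rw [hm1, hf0]; ring
      _ = ∫ z, m z.1 * m z.2 * f z.1 * (f z.1 - f z.2) ∂μ.prod μ := by
          rw [← integral_prod_mul, ← integral_prod_mul,
            ← integral_sub (hmf2.mul_prod hm) (hmf.mul_prod hmf)]
          exact integral_congr_ae (ae_of_all _ fun z => by ring)
  have hint : Integrable (fun z => m z.1 * m z.2 * f z.1 * (f z.1 - f z.2)) (μ.prod μ) :=
    ((hmf2.mul_prod hm).sub (hmf.mul_prod hmf)).congr (ae_of_all _ fun z => by simp only [Pi.sub_apply]; ring)
  have hyoung : ∫ c, m c * f c ^ 2 ∂μ ≤ (∫ c, m c * f c ^ 2 ∂μ) * ν₁ / (2 * ν₁)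
      + ν₁ / 2 * dirichletForm μ (fun _ c₁ => ψ c₁) m f := by
    have hR₁ := (hmf2.mul_prod hmψ).div_const (2 * ν₁)
    calc ∫ c, m c * f c ^ 2 ∂μ = ∫ z, m z.1 * m z.2 * f z.1 * (f z.1 - f z.2) ∂μ.prod μ := hE
      _ ≤ ∫ z, m z.1 * f z.1 ^ 2 * (m z.2 ^ 2 / ψ z.2) / (2 * ν₁)
            + ν₁ / 2 * (ψ z.2 * (m z.1 * (f z.1 - f z.2) ^ 2)) ∂μ.prod μ := by
          refine integral_mono_ae hint (hR₁.add (hD.const_mul _)) ?_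
          filter_upwards [Measure.quasiMeasurePreserving_fst.ae hm0] with z hz
          exact mul_mul_sub_le_young hz (hψ z.2) hν₁
      _ = _ := by
          rw [integral_add hR₁ (hD.const_mul _), integral_div, integral_const_mul,
            integral_prod_mul (fun c => m c * f c ^ 2) (fun c => m c ^ 2 / ψ c)]
          rfl
  have hhalf : (∫ c, m c * f c ^ 2 ∂μ) * ν₁ / (2 * ν₁) = (∫ c, m c * f c ^ 2 ∂μ) / 2 := by
    field_simp
  linarith

theorem integral_mul_jumpGenerator_self_le (hB : Measurable fun z : α × α => B z.1 z.2)
    (hBb : ∀ᵐ z ∂μ.prod μ, ‖B z.1 z.2‖ ≤ CB) (hm : Measurable m) (hmb : ∀ᵐ c ∂μ, ‖m c‖ ≤ Cm)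
    (hm0 : 0 ≤ᵐ[μ] m) (hm_stat : ∀ᵐ c ∂μ, (∫ c₁, B c c₁ ∂μ) * m c = ∫ c₁, B c₁ c * m c₁ ∂μ)
    (hm1 : ∫ c, m c ∂μ = 1) (hψm : Measurable ψ) (hψ : ∀ c, 0 < ψ c) {ν₂ : ℝ} (hν₂ : 0 < ν₂)
    (hlow : ∀ᵐ z ∂μ.prod μ, ν₂ * ψ z.2 ≤ B z.1 z.2)
    (hmψ : Integrable (fun c => m c ^ 2 / ψ c) μ) (hf : Measurable f) (hfb : ∀ c, ‖f c‖ ≤ Cf)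
    (hf0 : ∫ c, m c * f c ∂μ = 0) :
    ∫ c, m c * f c * jumpGenerator μ B f c ∂μ
      ≤ -(ν₂ / (2 * ∫ c, m c ^ 2 / ψ c ∂μ)) * ∫ c, m c * f c ^ 2 ∂μ := by
  set ν₁ := ∫ c, m c ^ 2 / ψ c ∂μ
  have hν₁ : 0 < ν₁ := integral_sq_div_pos hm1 hψ hmψ
  have hψb : ∀ᵐ z ∂μ.prod μ, ‖ψ z.2‖ ≤ CB / ν₂ := by
    filter_upwards [hlow, hBb] with z hlow hB
    rw [Real.norm_of_nonneg (hψ _).le, le_div_iff₀' hν₂]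
    exact hlow.trans ((le_abs_self _).trans hB)
  have hfsq : ∀ z : α × α, ‖(f z.1 - f z.2) ^ 2‖ ≤ (Cf + Cf) ^ 2 :=
    fun z => norm_sub_sq_le (hfb z.1) (hfb z.2)
  have hDψ := integrable_kernel_mul_fst_mul (B := fun _ c₁ => ψ c₁) (by fun_prop) hψb hm hmb
    (F := fun z => (f z.1 - f z.2) ^ 2) (by fun_prop) hfsq
  have hDB := integrable_kernel_mul_fst_mul hB hBb hm hmb
    (F := fun z => (f z.1 - f z.2) ^ 2) (by fun_prop) hfsq
  have hcomp : ν₂ * dirichletForm μ (fun _ c₁ => ψ c₁) m f ≤ dirichletForm μ B m f := by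
    rw [dirichletForm, dirichletForm, ← integral_const_mul]
    refine integral_mono_ae (hDψ.const_mul ν₂) hDB ?_
    filter_upwards [hlow, Measure.quasiMeasurePreserving_fst.ae hm0] with z hlow hmz
    rw [← mul_assoc]
    exact mul_le_mul_of_nonneg_right hlow (mul_nonneg hmz (sq_nonneg _))
  have hpoinc := integral_mul_sq_le_mul_dirichletForm (Cf := Cf)
    (Integrable.of_bound hm.aestronglyMeasurable Cm hmb) hm0 hm1 hψ hmψ hf.aestronglyMeasurable
    (ae_of_all _ hfb) hf0 hDψ
  rw [integral_mul_jumpGenerator_self hB hBb hm hmb hm_stat hf hfb]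
  have hrate : 0 ≤ ν₂ / (2 * ν₁) := by positivity
  calc -(1 / 2) * dirichletForm μ B m f
      ≤ -(1 / 2) * (ν₂ * dirichletForm μ (fun _ c₁ => ψ c₁) m f) := by linarith
    _ = -(ν₂ / (2 * ν₁)) * (ν₁ * dirichletForm μ (fun _ c₁ => ψ c₁) m f) := by
        field_simp
    _ ≤ -(ν₂ / (2 * ν₁)) * ∫ c, m c * f c ^ 2 ∂μ :=
        mul_le_mul_of_nonpos_left hpoinc (neg_nonpos.2 hrate)

end JumpGenerator

section Ochrombel

variable {g : ℝ → ℝ} {B : ℝ → ℝ → ℝ}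

theorem integral_netMeasure (hg : Measurable g) (hg0 : ∀ c, 0 ≤ g c) (h : ℝ → ℝ) :
    ∫ c, h c ∂netMeasure g = ∫ c in Ioi 0, g c * h c := by
  rw [netMeasure, integral_withDensity_eq_integral_toReal_smul hg.ennreal_ofReal
    (ae_of_all _ fun _ => ENNReal.ofReal_lt_top)]
  simp only [ENNReal.toReal_ofReal (hg0 _), smul_eq_mul]

theorem isProbabilityMeasure_netMeasure (hg0 : ∀ c, 0 ≤ g c) (hg1 : ∫ c in Ioi 0, g c = 1) :
    IsProbabilityMeasure (netMeasure g) := by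
  have hint : IntegrableOn g (Ioi 0) := Integrable.of_integral_ne_zero (by simp [hg1])
  constructor
  rw [netMeasure, withDensity_apply _ MeasurableSet.univ, Measure.restrict_univ,
    ← ofReal_integral_eq_lintegral_ofReal hint (ae_of_all _ hg0), hg1, ENNReal.ofReal_one]

theorem GamB_eq_integral (hg : Measurable g) (hg0 : ∀ c, 0 ≤ g c) (c : ℝ) :
    GamB B g c = ∫ c₁, B c c₁ ∂netMeasure g := by
  simp only [integral_netMeasure hg hg0, GamB, mul_comm]

theorem TB_eq_integral (hg : Measurable g) (hg0 : ∀ c, 0 ≤ g c) (h : ℝ → ℝ) (c : ℝ) :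
    TB B g h c = ∫ c₁, B c c₁ * h c₁ ∂netMeasure g := by
  simp only [integral_netMeasure hg hg0, TB, mul_comm]

theorem TBstar_eq_integral (hg : Measurable g) (hg0 : ∀ c, 0 ≤ g c) (m : ℝ → ℝ) (c : ℝ) :
    TBstar B g m c = ∫ c₁, B c₁ c * m c₁ ∂netMeasure g := by
  simp only [integral_netMeasure hg hg0, TBstar, mul_comm]

theorem stationary_of_GamB_mul_eq_TBstar (hg : Measurable g) (hg0 : ∀ c, 0 ≤ g c)
    {m : ℝ → ℝ} (hm_eig : ∀ᵐ c ∂netMeasure g, GamB B g c * m c = TBstar B g m c) :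
    ∀ᵐ c ∂netMeasure g,
      (∫ c₁, B c c₁ ∂netMeasure g) * m c = ∫ c₁, B c₁ c * m c₁ ∂netMeasure g := by
  simpa only [GamB_eq_integral hg hg0, TBstar_eq_integral hg hg0] using hm_eig

theorem ochRHS_ae_eq [IsFiniteMeasure (netMeasure g)] {p : ℝ → ℝ → ℝ} {t CB Cp : ℝ}
    (hg : Measurable g) (hg0 : ∀ c, 0 ≤ g c) (hB : Measurable fun z : ℝ × ℝ => B z.1 z.2)
    (hBb : ∀ᵐ z ∂(netMeasure g).prod (netMeasure g), ‖B z.1 z.2‖ ≤ CB)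
    (hp : Measurable fun c => p c t) (hpb : ∀ c, ‖p c t‖ ≤ Cp) :
    ∀ᵐ c ∂netMeasure g,
      ochRHS B g p c t = 1 / 2 * jumpGenerator (netMeasure g) B (fun c' => p c' t) c := by
  filter_upwards [jumpGenerator_ae_eq hB hBb hp.aestronglyMeasurable (ae_of_all _ hpb)] with c hc
  rw [ochRHS, hc, TB_eq_integral hg hg0, GamB_eq_integral hg hg0]

theorem integral_mul_ochRHS_eq_zero [IsFiniteMeasure (netMeasure g)] {m : ℝ → ℝ}
    {p : ℝ → ℝ → ℝ} {t CB Cm Cp : ℝ} (hg : Measurable g) (hg0 : ∀ c, 0 ≤ g c)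
    (hB : Measurable fun z : ℝ × ℝ => B z.1 z.2)
    (hBb : ∀ᵐ z ∂(netMeasure g).prod (netMeasure g), ‖B z.1 z.2‖ ≤ CB)
    (hm : Measurable m) (hmb : ∀ᵐ c ∂netMeasure g, ‖m c‖ ≤ Cm)
    (hm_eig : ∀ᵐ c ∂netMeasure g, GamB B g c * m c = TBstar B g m c)
    (hp : Measurable fun c => p c t) (hpb : ∀ c, ‖p c t‖ ≤ Cp) :
    ∫ c, m c * ochRHS B g p c t ∂netMeasure g = 0 := by
  rw [← mul_zero (1 / 2 : ℝ), ← integral_mul_jumpGenerator_eq_zero hB hBb hm hmb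
    (stationary_of_GamB_mul_eq_TBstar hg hg0 hm_eig) hp hpb, ← integral_const_mul]
  exact integral_congr_ae ((ochRHS_ae_eq hg hg0 hB hBb hp hpb).mono fun c hc => by
    simp only [hc]; ring)

theorem integral_mul_sub_mul_ochRHS_le [IsFiniteMeasure (netMeasure g)] {m ψ : ℝ → ℝ}
    {p : ℝ → ℝ → ℝ} {t ρ ν₂ CB Cm Cp : ℝ} (hg : Measurable g) (hg0 : ∀ c, 0 ≤ g c)
    (hB : Measurable fun z : ℝ × ℝ => B z.1 z.2)
    (hBb : ∀ᵐ z ∂(netMeasure g).prod (netMeasure g), ‖B z.1 z.2‖ ≤ CB)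
    (hm : Measurable m) (hmb : ∀ᵐ c ∂netMeasure g, ‖m c‖ ≤ Cm) (hm0 : 0 ≤ᵐ[netMeasure g] m)
    (hm_eig : ∀ᵐ c ∂netMeasure g, GamB B g c * m c = TBstar B g m c)
    (hm1 : ∫ c, m c ∂netMeasure g = 1) (hψm : Measurable ψ) (hψ : ∀ c, 0 < ψ c)
    (hν₂ : 0 < ν₂) (hlow : ∀ᵐ z ∂(netMeasure g).prod (netMeasure g), ν₂ * ψ z.2 ≤ B z.1 z.2)
    (hmψ : Integrable (fun c => m c ^ 2 / ψ c) (netMeasure g))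
    (hp : Measurable fun c => p c t) (hpb : ∀ c, ‖p c t‖ ≤ Cp)
    (hρ : ∫ c, m c * p c t ∂netMeasure g = ρ) :
    ∫ c, 2 * m c * (p c t - ρ) * ochRHS B g p c t ∂netMeasure g
      ≤ -(ν₂ / (2 * ∫ c, m c ^ 2 / ψ c ∂netMeasure g))
        * ∫ c, m c * (p c t - ρ) ^ 2 ∂netMeasure g := by
  have hm_int : Integrable m (netMeasure g) := .of_bound hm.aestronglyMeasurable Cm hmb
  have hq0 : ∫ c, m c * (p c t - ρ) ∂netMeasure g = 0 := by
    simp only [mul_sub]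
    rw [integral_sub (hm_int.mul_bdd hp.aestronglyMeasurable (ae_of_all _ hpb))
      (hm_int.mul_const ρ), integral_mul_const, hρ, hm1, one_mul, sub_self]
  calc ∫ c, 2 * m c * (p c t - ρ) * ochRHS B g p c t ∂netMeasure g
      = ∫ c, m c * (p c t - ρ)
          * jumpGenerator (netMeasure g) B (fun c => p c t - ρ) c ∂netMeasure g := by
        rw [jumpGenerator_sub_const (fun c => p c t) ρ]
        exact integral_congr_ae ((ochRHS_ae_eq hg hg0 hB hBb hp hpb).mono fun c hc => by
          simp only [hc]; ring)
    _ ≤ _ := integral_mul_jumpGenerator_self_le hB hBb hm hmb hm0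
        (stationary_of_GamB_mul_eq_TBstar hg hg0 hm_eig) hm1 hψm hψ hν₂ hlow hmψ
        (hp.sub_const ρ) (Cf := Cp + |ρ|)
        (fun c => (norm_sub_le _ _).trans (add_le_add (hpb c) le_rfl)) hq0

end Ochrombel

theorem ochrombel_exponential_convergence_general
    (g : ℝ → ℝ) (hg_meas : Measurable g) (hg_nonneg : ∀ c, 0 ≤ g c)
    (hg_prob : ∫ c in Ioi (0:ℝ), g c = 1)
    (B : ℝ → ℝ → ℝ) (hB_meas : Measurable (fun x : ℝ × ℝ => B x.1 x.2))
    (hB_bdd : ∃ C : ℝ, ∀ᵐ x ∂((netMeasure g).prod (netMeasure g)), |B x.1 x.2| ≤ C)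
    (m : ℝ → ℝ) (hm_meas : Measurable m)
    (hm_bdd : ∃ C : ℝ, ∀ᵐ c ∂(netMeasure g), |m c| ≤ C)
    (hm_nonneg : 0 ≤ᵐ[netMeasure g] m)
    (hm_eig : ∀ᵐ c ∂(netMeasure g), GamB B g c * m c = TBstar B g m c)
    (hm_norm : ∫ c, m c ∂(netMeasure g) = 1)
    (ψ : ℝ → ℝ) (hψ_meas : Measurable ψ) (hψ_pos : ∀ c, 0 < ψ c)
    (ν₂ : ℝ) (hν₂ : 0 < ν₂)
    (hlow : ∀ᵐ x ∂((netMeasure g).prod (netMeasure g)), ν₂ * ψ x.2 ≤ B x.1 x.2)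
    (hν₁_int : Integrable (fun c => (m c)^2 / ψ c) (netMeasure g))
    (p : ℝ → ℝ → ℝ)
    (hp_meas : Measurable (fun x : ℝ × ℝ => p x.1 x.2))
    (hp_bdd : ∃ C : ℝ, ∀ c t, |p c t| ≤ C)
    (ρ : ℝ) (hρ : ρ = ∫ c, m c * p c 0 ∂(netMeasure g))
    (hdiff_mass : ∀ t, HasDerivAt (fun s => ∫ c, m c * p c s ∂(netMeasure g))
      (∫ c, m c * ochRHS B g p c t ∂(netMeasure g)) t)
    (hdiff_E : ∀ t, HasDerivAt (fun s => ∫ c, m c * (p c s - ρ)^2 ∂(netMeasure g))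
      (∫ c, 2 * m c * (p c t - ρ) * ochRHS B g p c t ∂(netMeasure g)) t) :
    (∀ t : ℝ, 0 ≤ t → ∫ c, m c * p c t ∂(netMeasure g) = ρ) ∧
    (∃ ν : ℝ, 0 < ν ∧ ∀ t : ℝ, 0 ≤ t →
      (∫ c, m c * (p c t - ρ)^2 ∂(netMeasure g))
        ≤ (∫ c, m c * (p c 0 - ρ)^2 ∂(netMeasure g)) * Real.exp (-ν * t)) := by
  have := isProbabilityMeasure_netMeasure hg_nonneg hg_prob
  obtain ⟨CB, hCB⟩ := hB_bdd
  obtain ⟨Cm, hCm⟩ := hm_bdd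
  obtain ⟨Cp, hCp⟩ := hp_bdd
  have hpt (t : ℝ) : Measurable fun c => p c t := by fun_prop
  have hmass (t : ℝ) : ∫ c, m c * p c t ∂netMeasure g = ρ := by
    have hderiv (s : ℝ) : HasDerivAt (fun s => ∫ c, m c * p c s ∂netMeasure g) 0 s := by
      simpa only [integral_mul_ochRHS_eq_zero hg_meas hg_nonneg hB_meas hCB hm_meas hCm hm_eig
        (hpt s) (hCp · s)] using hdiff_mass s
    rw [is_const_of_deriv_eq_zero (fun s => (hderiv s).differentiableAt)
      (fun s => (hderiv s).deriv) t 0, hρ]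
  refine ⟨fun t _ => hmass t, _, div_pos hν₂ (mul_pos two_pos
    (integral_sq_div_pos hm_norm hψ_pos hν₁_int)), fun t ht => ?_⟩
  refine le_mul_exp_of_hasDerivAt_le_neg_mul hdiff_E (fun s => ?_) ht
  exact integral_mul_sub_mul_ochRHS_le hg_meas hg_nonneg hB_meas hCB hm_meas hCm hm_nonneg hm_eig
    hm_norm hψ_meas hψ_pos hν₂ hlow hν₁_int (hpt s) (hCp · s) (hmass s)

/-- Exponential convergence to the equilibrium `ρ` for the Ochrombel model: along solutions
of the linear scattering equation, `∫ m p̃(·,t) dμ = ρ` is conserved and the weighted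
`L²` distance to `ρ` decays exponentially; hence `p̃^∞ ≡ ρ` is asymptotically stable. -/
theorem ochrombel_exponential_convergence
    (g : ℝ → ℝ) (hg_meas : Measurable g) (hg_nonneg : ∀ c, 0 ≤ g c)
    (hg_prob : ∫ c in Ioi (0:ℝ), g c = 1)
    (B : ℝ → ℝ → ℝ) (hB_meas : Measurable (fun x : ℝ × ℝ => B x.1 x.2))
    (hB_pos : ∀ᵐ x ∂((netMeasure g).prod (netMeasure g)), 0 < B x.1 x.2)
    (hB_bdd : ∃ C : ℝ, ∀ᵐ x ∂((netMeasure g).prod (netMeasure g)), |B x.1 x.2| ≤ C)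
    (m : ℝ → ℝ) (hm_meas : Measurable m)
    (hm_bdd : ∃ C : ℝ, ∀ᵐ c ∂(netMeasure g), |m c| ≤ C)
    (hm_nonneg : 0 ≤ᵐ[netMeasure g] m)
    (hm_eig : ∀ᵐ c ∂(netMeasure g), GamB B g c * m c = TBstar B g m c)
    (hm_norm : ∫ c, m c ∂(netMeasure g) = 1)
    (ψ : ℝ → ℝ) (hψ_meas : Measurable ψ) (hψ_pos : ∀ c, 0 < ψ c)
    (ν₂ : ℝ) (hν₂ : 0 < ν₂)
    (hlow : ∀ᵐ x ∂((netMeasure g).prod (netMeasure g)), ν₂ * ψ x.2 ≤ B x.1 x.2)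
    (hν₁_int : Integrable (fun c => (m c)^2 / ψ c) (netMeasure g))
    (p : ℝ → ℝ → ℝ)
    (hp_meas : Measurable (fun x : ℝ × ℝ => p x.1 x.2))
    (hp_bdd : ∃ C : ℝ, ∀ c t, |p c t| ≤ C)
    (hp_ode : ∀ c t, HasDerivAt (fun s => p c s) (ochRHS B g p c t) t)
    (ρ : ℝ) (hρ : ρ = ∫ c, m c * p c 0 ∂(netMeasure g))
    (hdiff_mass : ∀ t, HasDerivAt (fun s => ∫ c, m c * p c s ∂(netMeasure g))
      (∫ c, m c * ochRHS B g p c t ∂(netMeasure g)) t)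
    (hdiff_E : ∀ t, HasDerivAt (fun s => ∫ c, m c * (p c s - ρ)^2 ∂(netMeasure g))
      (∫ c, 2 * m c * (p c t - ρ) * ochRHS B g p c t ∂(netMeasure g)) t) :
    (∀ t : ℝ, 0 ≤ t → ∫ c, m c * p c t ∂(netMeasure g) = ρ) ∧
    (∃ ν : ℝ, 0 < ν ∧ ∀ t : ℝ, 0 ≤ t →
      (∫ c, m c * (p c t - ρ)^2 ∂(netMeasure g))
        ≤ (∫ c, m c * (p c 0 - ρ)^2 ∂(netMeasure g)) * Real.exp (-ν * t)) :=
  ochrombel_exponential_convergence_general g hg_meas hg_nonneg hg_prob B hB_meas hB_bdd m hm_meas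
    hm_bdd hm_nonneg hm_eig hm_norm ψ hψ_meas hψ_pos ν₂ hν₂ hlow hν₁_int p hp_meas hp_bdd ρ hρ
    hdiff_mass hdiff_E
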